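/- arXiv:cs/0606070 — 2 statements merged into one kernel-verified Lean document; each statement's English description precedes it below -/
import Mathlib

section
/- There is no universal computable predictor: it is not the case that there exists a computable predictor p : List Bool → Bool such that p learns to predict every computable binary sequence. Equivalently, for every computable p there exists a computable ω : ℕ → Bool such that p does not learn to predict ω. -/
/-- The length-`n` prefix `[ω 0, …, ω (n−1)]` of a binary sequence `ω`. -/
def prefixList (ω : ℕ → Bool) (n : ℕ) : List Bool := (List.range n).map ω

/-- A predictor `p` learns to predict the sequence `ω` if from some point on it
always predicts the next symbol correctly. -/
def LearnsToPredict (p : List Bool → Bool) (ω : ℕ → Bool) : Prop :=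
  ∃ m : ℕ, ∀ n ≥ m, p (prefixList ω n) = ω n

private def diagList (p : List Bool → Bool) : ℕ → List Bool
  | 0 => []
  | n + 1 => diagList p n ++ [!p (diagList p n)]

private lemma diagList_comp {p : List Bool → Bool} (hp : Computable p) :
    Computable (diagList p) := by
  have h2 : Computable fun x : ℕ × (ℕ × List Bool) => x.2.2 :=
    Computable.snd.comp Computable.snd
  have hstep : Computable fun x : ℕ × (ℕ × List Bool) => x.2.2 ++ [!p x.2.2] :=
    Computable.list_append.comp h2
      (Computable.list_cons.comp (Primrec.not.to_comp.comp (hp.comp h2))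
        (Computable.const []))
  have H := Computable.nat_rec (Computable.id (α := ℕ))
    (Computable.const ([] : List Bool)) hstep.to₂
  have aux : ∀ n : ℕ,
      (Nat.rec ([] : List Bool) (fun _ IH => IH ++ [!p IH]) n) = diagList p n := by
    intro n
    induction n with
    | zero => rfl
    | succ n ih => simp only [diagList, ← ih]
  exact H.of_eq fun n => aux n

private lemma prefix_eq (p : List Bool → Bool) (n : ℕ) :
    prefixList (fun k => !p (diagList p k)) n = diagList p n := by
  induction n with
  | zero => rfl
  | succ n ih =>
    show (List.range (n + 1)).map _ = _
    rw [List.range_succ, List.map_append]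
    rw [show (List.range n).map (fun k => !p (diagList p k)) = diagList p n from ih]
    rfl

/-- There is no universal computable predictor learning every computable
binary sequence. -/
theorem stmt_3 :
    ¬ ∃ p : List Bool → Bool, Computable p ∧
        ∀ ω : ℕ → Bool, Computable ω → LearnsToPredict p ω := by
  rintro ⟨p, hp, hall⟩
  set ω : ℕ → Bool := fun k => !p (diagList p k) with hω
  have hωc : Computable ω := Primrec.not.to_comp.comp (hp.comp (diagList_comp hp))
  obtain ⟨m, hm⟩ := hall ω hωc
  have := hm m le_rfl
  rw [prefix_eq p m] at this
  simp [hω] at this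
end

section
/- Every uniformly computable family of binary sequences is learnable by a single computable predictor: for every computable function g : ℕ → ℕ → Bool (computable as a function of the pair of arguments), there exists a computable predictor p : List Bool → Bool such that for every ω : ℕ → Bool, if there exists k with ω = g k, then p learns to predict ω. -/
open Filter

@[simp]
lemma prefixList_length (ω : ℕ → Bool) (n : ℕ) : (prefixList ω n).length = n := by
  simp [prefixList]

lemma prefixList_succ (ω : ℕ → Bool) (n : ℕ) :
    prefixList ω (n + 1) = prefixList ω n ++ [ω n] := by
  simp [prefixList, List.range_succ]

lemma prefixList_eq_prefixList_iff {α β : ℕ → Bool} {n : ℕ} :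
    prefixList α n = prefixList β n ↔ ∀ i < n, α i = β i := by
  simp [prefixList, List.map_inj_left]

lemma eventually_prefixList_ne {α β : ℕ → Bool} (h : α ≠ β) :
    ∀ᶠ n in atTop, prefixList α n ≠ prefixList β n := by
  obtain ⟨d, hd⟩ := Function.ne_iff.mp h
  filter_upwards [eventually_gt_atTop d] with n hn
  exact fun heq => hd (prefixList_eq_prefixList_iff.mp heq d hn)

lemma Computable₂.prefixList {α : Type*} [Primcodable α] {f : α → ℕ → Bool}
    (hf : Computable₂ f) : Computable₂ fun a n => prefixList (f a) n := by
  have hrec : Computable₂ fun a n =>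
      (Nat.rec [] (fun i l => l ++ [f a i]) n : List Bool) :=
    Computable.nat_rec Computable.snd (Computable.const [])
      (Computable.list_concat.comp (Computable.snd.comp Computable.snd)
        (hf.comp (Computable.fst.comp Computable.fst) (Computable.fst.comp Computable.snd))).to₂
  refine hrec.of_eq fun ⟨a, n⟩ => ?_
  dsimp only
  induction n with
  | zero => rfl
  | succ n ih => rw [prefixList_succ, ← ih]

/-- Indices `j > l.length` are accepted as well, which makes the search total. -/
def leastConsistentIndex (g : ℕ → ℕ → Bool) (l : List Bool) : ℕ :=
  Nat.find (p := fun j => l.length < j ∨ prefixList (g j) l.length = l)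
    ⟨l.length + 1, Or.inl l.length.lt_succ_self⟩

def enumerationPredictor (g : ℕ → ℕ → Bool) (l : List Bool) : Bool :=
  g (leastConsistentIndex g l) l.length

lemma computable_enumerationPredictor {g : ℕ → ℕ → Bool} (hg : Computable₂ g) :
    Computable (enumerationPredictor g) := by
  have hsearch : ComputablePred fun x : List Bool × ℕ =>
      x.1.length < x.2 ∨ prefixList (g x.2) x.1.length = x.1 := by
    refine Computable.computablePred ?_
    have hlength : Computable fun x : List Bool × ℕ => x.1.length :=
      Computable.list_length.comp Computable.fst
    have hlt := Primrec.nat_lt.decide.to_comp.comp hlength Computable.snd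
    have heq := Primrec.eq.decide.to_comp.comp
      (hg.prefixList.comp Computable.snd hlength) Computable.fst
    exact (Primrec.or.to_comp.comp hlt heq).of_eq fun x => by simp
  have hindex : Computable (leastConsistentIndex g) := Computable.find hsearch _
  exact hg.comp hindex Computable.list_length

lemma leastConsistentIndex_eventually_eq {g : ℕ → ℕ → Bool} {ω : ℕ → Bool} {j : ℕ}
    (hj : g j = ω) (hmin : ∀ i < j, g i ≠ ω) :
    ∀ᶠ n in atTop, leastConsistentIndex g (prefixList ω n) = j := by
  have hinconsistent : ∀ᶠ n in atTop, ∀ i < j, prefixList (g i) n ≠ prefixList ω n :=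
    (eventually_all_finite (Set.finite_lt_nat j)).mpr fun i hi =>
      eventually_prefixList_ne (hmin i hi)
  filter_upwards [hinconsistent, eventually_ge_atTop j] with n hn hjn
  rw [leastConsistentIndex, Nat.find_eq_iff]
  simp only [prefixList_length, not_or, not_lt, hj, or_true, true_and]
  exact fun i hi => ⟨by omega, hn i hi⟩

lemma learnsToPredict_enumerationPredictor (g : ℕ → ℕ → Bool) (k : ℕ) :
    LearnsToPredict (enumerationPredictor g) (g k) := by
  classical
  have hex : ∃ j, g j = g k := ⟨k, rfl⟩
  have hindex := leastConsistentIndex_eventually_eq (Nat.find_spec hex)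
    fun i hi => Nat.find_min hex hi
  refine eventually_atTop.mp (hindex.mono fun n hn => ?_)
  rw [enumerationPredictor, hn, prefixList_length, Nat.find_spec hex]

/-- Every uniformly computable family of binary sequences is learnable by a
single computable predictor. -/
theorem stmt_5 :
    ∀ g : ℕ → ℕ → Bool, Computable (fun x : ℕ × ℕ => g x.1 x.2) →
      ∃ p : List Bool → Bool, Computable p ∧
        ∀ ω : ℕ → Bool, (∃ k : ℕ, ω = g k) → LearnsToPredict p ω := by
  intro g hg
  refine ⟨enumerationPredictor g, computable_enumerationPredictor hg, ?_⟩
  rintro ω ⟨k, rfl⟩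
  exact learnsToPredict_enumerationPredictor g k
end
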